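/- Let D ∈ M_{k×l}(ℝ) be a regular matrix with no zero rows and no zero columns; that is, every row of D contains exactly one entry equal to 1, exactly one entry equal to −1, and all other entries 0. Then for every connected component C of the column graph of D, the sum of the columns of D indexed by C is the zero vector: Σ_{j∈C} D(:,j) = 0. -/

import Mathlib

open scoped Classical

/-- The `j`-th column of a matrix, as a vector. -/
def col {k l : ℕ} (M : Matrix (Fin k) (Fin l) ℝ) (j : Fin l) : Fin k → ℝ :=
  fun i => M i j

/-- The *column graph* of a matrix `D`: the simple graph on the column indices in which
two distinct columns are adjacent iff some row has a non-zero entry in both columns. -/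
def columnGraph {k l : ℕ} (D : Matrix (Fin k) (Fin l) ℝ) : SimpleGraph (Fin l) where
  Adj j₁ j₂ := j₁ ≠ j₂ ∧ ∃ i : Fin k, D i j₁ ≠ 0 ∧ D i j₂ ≠ 0
  symm := by
    constructor
    intro a b h
    exact ⟨h.1.symm, h.2.imp fun i hi => ⟨hi.2, hi.1⟩⟩
  loopless := by
    constructor
    intro a h
    exact h.1 rfl

/-!
Fix a row `i`. Its non-zero entries lie in columns that are adjacent in the column graph, hence in
a single connected component. A component summed over row `i` therefore either contains the whole
support of the row, giving the full row sum `1 + (-1) = 0`, or misses it entirely, giving `0`.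
-/

open Finset

theorem SimpleGraph.sum_filter_reachable_eq_zero {V M : Type*} [Fintype V] [AddCommMonoid M]
    (G : SimpleGraph V) (w : V) [DecidablePred (G.Reachable w)] (f : V → M)
    (hsum : ∑ v, f v = 0) (hsupp : ∀ u v, f u ≠ 0 → f v ≠ 0 → G.Reachable u v) :
    ∑ v ∈ univ.filter (G.Reachable w), f v = 0 := by
  by_cases hmeets : ∃ u, G.Reachable w u ∧ f u ≠ 0
  · obtain ⟨u, hwu, hu⟩ := hmeets
    rw [sum_filter_of_ne fun v _ hv => hwu.trans (hsupp u v hu hv), hsum]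
  · push Not at hmeets
    exact sum_eq_zero fun v hv => hmeets v (mem_filter.mp hv).2

theorem columnGraph_reachable_of_ne_zero {k l : ℕ} (D : Matrix (Fin k) (Fin l) ℝ) (i : Fin k)
    {u v : Fin l} (hu : D i u ≠ 0) (hv : D i v ≠ 0) : (columnGraph D).Reachable u v := by
  rcases eq_or_ne u v with rfl | hne
  · rfl
  · exact SimpleGraph.Adj.reachable ⟨hne, i, hu, hv⟩

theorem sum_col_filter_reachable_eq_zero {k l : ℕ} (D : Matrix (Fin k) (Fin l) ℝ)
    (hrowsum : ∀ i, ∑ j, D i j = 0) (j : Fin l) :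
    ∑ j' ∈ univ.filter ((columnGraph D).Reachable j), col D j' = 0 := by
  funext i
  rw [Finset.sum_apply]
  exact (columnGraph D).sum_filter_reachable_eq_zero j (D i) (hrowsum i)
    fun _ _ => columnGraph_reachable_of_ne_zero D i

theorem stmt3 {k l : ℕ} (D : Matrix (Fin k) (Fin l) ℝ)
    (hrow : ∀ i : Fin k, ∃ j₁ j₂ : Fin l, j₁ ≠ j₂ ∧ D i j₁ = 1 ∧ D i j₂ = -1 ∧
      ∀ j : Fin l, j ≠ j₁ → j ≠ j₂ → D i j = 0) :
    ∀ j : Fin l,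
      ∑ j' ∈ Finset.univ.filter (fun j' => (columnGraph D).Reachable j j'), col D j' = 0 := by
  refine sum_col_filter_reachable_eq_zero D fun i => ?_
  obtain ⟨j₁, j₂, hne, h₁, h₂, hzero⟩ := hrow i
  rw [Fintype.sum_eq_add j₁ j₂ hne fun j hj => hzero j hj.1 hj.2, h₁, h₂, add_neg_cancel]
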